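/- Suppose d = gcd(q−1, k·e1 − e2) = 1. Then C is a code of length q^k−1, with q^{k+1} codewords (dimension k+1 over F_q) and minimum distance h = q^{k−1}(q−1) − 1, and it meets the Griesmer bound with equality: ∑_{i=0}^{k} ⌈(q^{k−1}(q−1) − 1)/q^i⌉ = q^k − 1. -/

import Mathlib

open Finset

noncomputable section

attribute [local instance] Classical.propDecidable

variable (p : ℕ) {F E : Type*} [Field F] [Fintype F] [Field E] [Fintype E]
  [Algebra F E] [Algebra (ZMod p) F]

/-- The canonical additive character `χ(x) = ζ_p^{Tr_{q/p}(x)}` of `F`. -/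
def chi (x : F) : ℂ :=
  Complex.exp (2 * (Real.pi : ℂ) * Complex.I *
    (((Algebra.trace (ZMod p) F) x).val : ℂ) / (p : ℂ))

/-- The Gauss sum `G(ψ, χ) = ∑_{x ∈ F^*} ψ(x) χ(x)` of a map `ψ : F → ℂ`. -/
def gaussF (ψ : F → ℂ) : ℂ := ∑ x : Fˣ, ψ (x : F) * chi p (x : F)

/-- The exponential sum `T_{(e1,e2)}(a,b)`; here `x^{(q^k-1)/(q-1)}` is written as the
field norm of `x`. -/
def Tsum (e1 e2 : ℕ) (a : F) (b : E) : ℂ :=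
  ∑ y : Fˣ, ∑ x : Eˣ,
    chi p ((y : F) * a * ((Algebra.norm F) (x : E)) ^ e1) *
    chi p ((Algebra.trace F E) ((algebraMap F E (y : F)) * b * (x : E) ^ e2))

/-- The `i`-th coordinate `a·γ^{((q^k-1)/(q-1))·e1·i} + Tr(b·γ^{e2·i})` of the codeword
`c(a,b)`; here `γ^{(q^k-1)/(q-1)}` is written as the field norm of `γ`. -/
def coord (γ : Eˣ) (e1 e2 : ℕ) (a : F) (b : E) (i : ℕ) : F :=
  a * (Algebra.norm F) ((γ : E) ^ (e1 * i)) + (Algebra.trace F E) (b * (γ : E) ^ (e2 * i))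

/-- The Hamming weight of the codeword `c(a,b)` of length `n`. -/
def wH (n : ℕ) (γ : Eˣ) (e1 e2 : ℕ) (a : F) (b : E) : ℕ :=
  ((Finset.range n).filter fun i => coord γ e1 e2 a b i ≠ 0).card

/-!
Let `q = #F`, `k = [E : F]`, and write `N`, `Tr` for the norm and trace of `E/F`. The `i`-th
coordinate of `c(a,b)` is `f_{a,b}(γ^i)` with `f_{a,b}(x) = a N(x)^{e1} + Tr(b x^{e2})`, so the
weight of `c(a,b)` is `q^k - 1` minus the number `Z(a,b)` of zeros of `f_{a,b}` on `E^*`.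

For `c ∈ F^*` we have `f_{a,b}(c x) = c^{e2} f_{a c^{k e1 - e2}, b}(x)`, and the powers
`c^{k e1 - e2}` exhaust `F^*` because `k e1 - e2` is prime to `q - 1`: so `Z(a,b)` is the same for
all `a ≠ 0`. Each `x` is a zero of `f_{a,b}` for exactly one `a`, so `∑_a Z(a,b) = q^k - 1`. For
`b ≠ 0`, whether `Tr(b x^{e2}) = 0` only depends on the coset of `x^{e2}` modulo `F^*`, and
`x ↦ x^{e2}` permutes the `(q^k - 1)/(q - 1)` cosets; hence `Z(0,b) = q^{k-1} - 1`, the number of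
nonzero points of a hyperplane. Therefore `Z(a,b) = q^{k-1}` when `a, b ≠ 0`, and the nonzero
weights are `q^{k-1}(q-1) - 1`, `q^{k-1}(q-1)` and `q^k - 1`. Since they are positive,
`(a,b) ↦ c(a,b)` is injective.
-/

section GroupCounting

variable {G : Type*} [Group G]

theorem card_filter_range_card_pow [Fintype G] {γ : G} (hγ : ∀ x : G, x ∈ Subgroup.zpowers γ)
    (P : G → Prop) : #{i ∈ range (Nat.card G) | P (γ ^ i)} = #{x | P x} := by
  rw [← IsCyclic.image_range_card hγ, filter_image, card_image_of_injOn]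
  rw [← orderOf_eq_card_of_forall_mem_zpowers hγ]
  exact pow_injOn_Iio_orderOf.mono fun i hi => by simpa using (mem_filter.mp hi).1

theorem card_filter_mul_left [Fintype G] (c : G) (P : G → Prop) :
    #{x | P (c * x)} = #{x | P x} :=
  card_bij' (fun x _ => c * x) (fun y _ => c⁻¹ * y) (by simp) (by simp) (by simp) (by simp)

theorem zpow_surjective_of_gcd_card_eq_one {t : ℤ} (ht : Int.gcd (Nat.card G) t = 1) :
    Function.Surjective fun g : G => g ^ t := by
  obtain ⟨u, v, huv⟩ := Int.isCoprime_iff_gcd_eq_one.mpr ht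
  intro g
  refine ⟨g ^ v, ?_⟩
  have hcard : g ^ (Nat.card G : ℤ) = 1 := by rw [zpow_natCast, pow_card_eq_one']
  have hvt : v * t = 1 - u * Nat.card G := by linarith
  show (g ^ v) ^ t = g
  rw [← zpow_mul, hvt, zpow_sub, zpow_one, mul_comm, zpow_mul, hcard, one_zpow, inv_one, mul_one]

end GroupCounting

theorem card_filter_pow_eq_of_coprime_index {G : Type*} [CommGroup G] [Fintype G]
    (H : Subgroup G) {P : G → Prop} (hP : ∀ x, ∀ h ∈ H, P (x * h) ↔ P x) {e : ℕ}
    (he : Nat.Coprime H.index e) : #{x | P (x ^ e)} = #{x | P x} := by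
  set R : G ⧸ H → Prop := fun C => P C.out
  have hPR : ∀ x, P x ↔ R x := fun x => by
    obtain ⟨h, hh⟩ := QuotientGroup.mk_out_eq_mul H x
    simp only [R, hh, hP x h h.2]
  have hcount : ∀ S : G ⧸ H → Prop, #{x : G | S x} = Nat.card H * Nat.card {C | S C} := by
    intro S
    rw [← QuotientGroup.card_preimage_mk, Nat.card_eq_card_toFinset]
    congr 1
    ext
    simp
  simp only [hPR, QuotientGroup.mk_pow]
  rw [hcount (fun C => R (C ^ e)), hcount R]
  congr 1
  exact Nat.card_congr ((powCoprime he).subtypeEquiv fun _ => Iff.rfl)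

theorem card_filter_units_add_one {G₀ : Type*} [GroupWithZero G₀] [Fintype G₀]
    {P : G₀ → Prop} (h0 : P 0) : #{x : G₀ˣ | P x} + 1 = #{x : G₀ | P x} := by
  rw [← card_erase_add_one (mem_filter.mpr ⟨mem_univ _, h0⟩)]
  congr 1
  refine card_bij (fun x _ => (x : G₀)) (fun x hx => ?_) (fun x _ y _ h => Units.ext h)
    (fun y hy => ?_)
  · simpa [x.ne_zero] using hx
  · obtain ⟨hy0, hy⟩ := mem_erase.mp hy
    exact ⟨Units.mk0 y hy0, by simpa using hy, rfl⟩

theorem card_filter_eq_zero_of_surjective {K V : Type*} [Field K] [Fintype K] [AddCommGroup V]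
    [Module K V] [Fintype V] {f : V →ₗ[K] K} (hf : Function.Surjective f) :
    #{x | f x = 0} = Fintype.card K ^ (Module.finrank K V - 1) := by
  have hrank := LinearMap.finrank_range_add_finrank_ker f
  rw [LinearMap.range_eq_top.mpr hf, finrank_top, Module.finrank_self] at hrank
  have hker : Module.finrank K (LinearMap.ker f) = Module.finrank K V - 1 := by omega
  rw [← Fintype.card_subtype, ← hker, ← Module.card_eq_pow_finrank]
  rfl

theorem ceil_mul_sub_one_div {r : ℚ} (hr : 1 < r) (n : ℤ) : ⌈(n * r - 1) / r⌉ = n := by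
  have hr0 : 0 < r := by linarith
  rw [Int.ceil_eq_iff, lt_div_iff₀ hr0, div_le_iff₀ hr0]
  constructor <;> nlinarith

theorem griesmer_sum_eq {q k : ℕ} (hq : 2 ≤ q) (hk : 2 ≤ k) :
    ∑ i ∈ range (k + 1), ⌈((q ^ (k - 1) * (q - 1) - 1 : ℕ) : ℚ) / (q : ℚ) ^ i⌉
      = (q : ℤ) ^ k - 1 := by
  obtain ⟨m, rfl⟩ : ∃ m, k = m + 1 := ⟨k - 1, by omega⟩
  rw [Nat.add_sub_cancel]
  have hqm : 2 ≤ q ^ m := le_trans hq (Nat.le_self_pow (by omega) q)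
  have hh : 1 ≤ q ^ m * (q - 1) := Nat.mul_pos (by positivity) (by omega)
  have hcast : ((q ^ m * (q - 1) - 1 : ℕ) : ℚ) = (q : ℚ) ^ m * (q - 1) - 1 := by
    rw [Nat.cast_sub hh, Nat.cast_mul, Nat.cast_sub (by omega)]
    push_cast
    ring
  have hmiddle : ∀ i < m, ⌈((q ^ m * (q - 1) - 1 : ℕ) : ℚ) / (q : ℚ) ^ (i + 1)⌉
      = (q : ℤ) ^ (m - 1 - i) * (q - 1) := by
    intro i hi
    have hpow : (q : ℚ) ^ m = q ^ (m - 1 - i) * q ^ (i + 1) := by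
      rw [← pow_add]
      congr 1
      omega
    have hr : (1 : ℚ) < (q : ℚ) ^ (i + 1) := one_lt_pow₀ (by exact_mod_cast hq) (by omega)
    rw [← ceil_mul_sub_one_div hr ((q : ℤ) ^ (m - 1 - i) * (q - 1)), hcast, hpow]
    push_cast
    ring_nf
  have hlast : ⌈((q ^ m * (q - 1) - 1 : ℕ) : ℚ) / (q : ℚ) ^ (m + 1)⌉ = 1 := by
    have hpos : (0 : ℚ) < (q : ℚ) ^ (m + 1) := by positivity
    have hqm' : (2 : ℚ) ≤ (q : ℚ) ^ m := by exact_mod_cast hqm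
    have hq' : (2 : ℚ) ≤ q := by exact_mod_cast hq
    rw [Int.ceil_eq_iff, hcast, lt_div_iff₀ hpos, div_le_iff₀ hpos, pow_succ]
    push_cast
    constructor <;> nlinarith
  rw [sum_range_succ, sum_range_succ', sum_congr rfl fun i hi => hmiddle i (mem_range.mp hi),
    hlast, ← sum_mul, sum_range_reflect (fun j => (q : ℤ) ^ j) m, geom_sum_mul, pow_zero,
    div_one, Int.ceil_natCast, Nat.cast_sub hh]
  push_cast [Nat.cast_sub (by omega : 1 ≤ q)]
  ring

section CodeWeights

open Module

variable {K L : Type*} [Field K] [Field L] [Algebra K L] (e1 e2 : ℕ)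

def codeFun (a : K) (b : L) (x : L) : K :=
  a * Algebra.norm K x ^ e1 + Algebra.trace K L (b * x ^ e2)

def zeroCount [Fintype L] (a : K) (b : L) : ℕ := #{x : Lˣ | codeFun e1 e2 a b x = 0}

theorem coord_eq_codeFun (γ : Lˣ) (a : K) (b : L) (i : ℕ) :
    coord γ e1 e2 a b i = codeFun e1 e2 a b ((γ ^ i : Lˣ) : L) := by
  simp only [coord, codeFun, Units.val_pow_eq_pow_val, ← pow_mul, mul_comm i, map_pow]

theorem coord_sub (γ : Lˣ) (a a' : K) (b b' : L) (i : ℕ) :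
    coord γ e1 e2 (a - a') (b - b') i = coord γ e1 e2 a b i - coord γ e1 e2 a' b' i := by
  simp only [coord, sub_mul, map_sub]
  ring

theorem card_range_codeword {n : ℕ} {γ : Lˣ}
    (hpos : ∀ (a : K) (b : L), ¬(a = 0 ∧ b = 0) → 0 < wH n γ e1 e2 a b) :
    Nat.card (Set.range fun ab : K × L => fun i : Fin n => coord γ e1 e2 ab.1 ab.2 i)
      = Nat.card (K × L) := by
  refine Nat.card_range_of_injective fun ⟨a, b⟩ ⟨a', b'⟩ h => ?_
  have hzero : wH n γ e1 e2 (a - a') (b - b') = 0 := by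
    rw [wH, card_eq_zero, filter_eq_empty_iff]
    intro i hi
    rw [coord_sub, not_not, sub_eq_zero]
    exact congrFun h ⟨i, mem_range.mp hi⟩
  obtain ⟨ha, hb⟩ : a - a' = 0 ∧ b - b' = 0 := by
    by_contra hne
    exact (hpos _ _ hne).ne' hzero
  rw [sub_eq_zero] at ha hb
  rw [ha, hb]

theorem codeFun_algebraMap_mul {c : K} (hc : c ≠ 0) (a : K) (b x : L) :
    codeFun e1 e2 a b (algebraMap K L c * x) =
      c ^ e2 * codeFun e1 e2 (a * c ^ (finrank K L * e1) / c ^ e2) b x := by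
  have htrace : Algebra.trace K L (b * (algebraMap K L c ^ e2 * x ^ e2))
      = c ^ e2 * Algebra.trace K L (b * x ^ e2) := by
    rw [← map_pow, mul_left_comm, ← Algebra.smul_def, map_smul, smul_eq_mul]
  simp only [codeFun, map_mul, Algebra.norm_algebraMap, mul_pow, ← pow_mul]
  rw [htrace]
  field_simp

variable [Fintype L]

theorem zeroCount_mul_zpow (c : Kˣ) (a : K) (b : L) :
    zeroCount e1 e2 (a * ((c ^ ((finrank K L * e1 : ℕ) - e2 : ℤ) : Kˣ) : K)) b
      = zeroCount e1 e2 a b := by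
  have hδ : ((c ^ ((finrank K L * e1 : ℕ) - e2 : ℤ) : Kˣ) : K)
      = (c : K) ^ (finrank K L * e1) / (c : K) ^ e2 := by
    rw [Units.val_zpow_eq_zpow_val, zpow_sub₀ c.ne_zero, zpow_natCast, zpow_natCast]
  conv_rhs => rw [zeroCount, ← card_filter_mul_left (Units.map (algebraMap K L : K →* L) c)]
  refine congrArg card (filter_congr fun x _ => ?_)
  simp only [Units.val_mul, Units.coe_map, MonoidHom.coe_coe,
    codeFun_algebraMap_mul e1 e2 c.ne_zero, hδ, mul_div_assoc]
  exact (mul_eq_zero_iff_left (pow_ne_zero _ c.ne_zero)).symm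

theorem zeroCount_zero_right {a : K} (ha : a ≠ 0) : zeroCount e1 e2 a (0 : L) = 0 := by
  rw [zeroCount, card_eq_zero, filter_eq_empty_iff]
  intro x _
  simp [codeFun, ha, Algebra.norm_eq_zero_iff, x.ne_zero]

theorem wH_eq_card_sub_zeroCount {γ : Lˣ} (hγ : ∀ x : Lˣ, x ∈ Subgroup.zpowers γ) (a : K)
    (b : L) : wH (Nat.card Lˣ) γ e1 e2 a b = Nat.card Lˣ - zeroCount e1 e2 a b := by
  have hcount : wH (Nat.card Lˣ) γ e1 e2 a b = #{x : Lˣ | codeFun e1 e2 a b x ≠ 0} := by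
    rw [wH]
    convert card_filter_range_card_pow hγ fun x : Lˣ => codeFun e1 e2 a b x ≠ 0 using 3
    rw [coord_eq_codeFun]
  have h : zeroCount e1 e2 a b + #{x : Lˣ | codeFun e1 e2 a b x ≠ 0} = Fintype.card Lˣ :=
    card_filter_add_card_filter_not _
  rw [hcount, Nat.card_eq_fintype_card]
  omega

variable [Fintype K]

theorem zeroCount_eq_of_ne_zero
    (hd : Int.gcd ((Fintype.card K : ℤ) - 1) ((finrank K L : ℤ) * e1 - e2) = 1)
    {a a' : K} (ha : a ≠ 0) (ha' : a' ≠ 0) (b : L) :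
    zeroCount e1 e2 a b = zeroCount e1 e2 a' b := by
  have hcard : ((Nat.card Kˣ : ℕ) : ℤ) = (Fintype.card K : ℤ) - 1 := by
    rw [Nat.card_units, Nat.card_eq_fintype_card, Nat.cast_sub (Fintype.card_pos (α := K))]
    rfl
  obtain ⟨c, hc⟩ := zpow_surjective_of_gcd_card_eq_one (G := Kˣ)
    (t := (finrank K L * e1 : ℕ) - e2) (by rw [hcard]; push_cast; exact hd)
    (Units.mk0 a' ha' / Units.mk0 a ha)
  have hc' : c ^ ((finrank K L * e1 : ℕ) - e2 : ℤ) = Units.mk0 a' ha' / Units.mk0 a ha := hc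
  rw [← zeroCount_mul_zpow e1 e2 c, hc']
  simp [mul_div_cancel₀ _ ha]

theorem sum_zeroCount (b : L) : ∑ a : K, zeroCount e1 e2 a b = Fintype.card Lˣ := by
  have hroot : ∀ x : Lˣ, #{a : K | codeFun e1 e2 a b x = 0} = 1 := fun x => by
    have hN : Algebra.norm K (x : L) ^ e1 ≠ 0 :=
      pow_ne_zero _ (Algebra.norm_ne_zero_iff.mpr x.ne_zero)
    rw [card_eq_one]
    refine ⟨-Algebra.trace K L (b * x ^ e2) / Algebra.norm K (x : L) ^ e1, ?_⟩
    ext a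
    simp [codeFun, eq_div_iff hN, add_eq_zero_iff_eq_neg]
  simp only [zeroCount, card_filter]
  rw [sum_comm]
  simp only [← card_filter, hroot, sum_const, card_univ, smul_eq_mul, mul_one]

theorem card_units_filter_trace_mul_eq_zero {b : L} (hb : b ≠ 0) :
    #{x : Lˣ | Algebra.trace K L (b * x) = 0} = Fintype.card K ^ (finrank K L - 1) - 1 := by
  have hsurj : Function.Surjective ((Algebra.trace K L).comp (LinearMap.mulLeft K b)) :=
    fun y => by
      obtain ⟨z, hz⟩ := Algebra.trace_surjective K L y
      exact ⟨b⁻¹ * z, by simp [← mul_assoc, mul_inv_cancel₀ hb, hz]⟩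
  have hker : #{x : L | Algebra.trace K L (b * x) = 0} = Fintype.card K ^ (finrank K L - 1) :=
    card_filter_eq_zero_of_surjective hsurj
  rw [← card_filter_units_add_one (P := fun x : L => Algebra.trace K L (b * x) = 0)
    (by simp)] at hker
  omega

theorem index_range_unitsMap_algebraMap :
    (Units.map (algebraMap K L : K →* L)).range.index
      = (Fintype.card L - 1) / (Fintype.card K - 1) := by
  have hinj : Function.Injective (Units.map (algebraMap K L : K →* L)) :=
    Units.map_injective (algebraMap K L).injective
  have h := Subgroup.card_mul_index (Units.map (algebraMap K L : K →* L)).range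
  rw [← Nat.card_congr (MonoidHom.ofInjective hinj).toEquiv, Nat.card_units, Nat.card_units,
    Nat.card_eq_fintype_card, Nat.card_eq_fintype_card] at h
  exact (Nat.div_eq_of_eq_mul_right (Nat.sub_pos_of_lt (Fintype.one_lt_card (α := K)))
    h.symm).symm

theorem zeroCount_zero_left
    (he2 : Nat.Coprime ((Fintype.card L - 1) / (Fintype.card K - 1)) e2) {b : L} (hb : b ≠ 0) :
    zeroCount e1 e2 (0 : K) b = Fintype.card K ^ (finrank K L - 1) - 1 := by
  have hinv : ∀ x : Lˣ, ∀ h ∈ (Units.map (algebraMap K L : K →* L)).range,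
      Algebra.trace K L (b * ↑(x * h)) = 0 ↔ Algebra.trace K L (b * x) = 0 := by
    rintro x _ ⟨c, rfl⟩
    simp [mul_comm _ (algebraMap K L c), ← Algebra.smul_def, c.ne_zero]
  have hzero :
      zeroCount e1 e2 (0 : K) b = #{x : Lˣ | Algebra.trace K L (b * ↑(x ^ e2)) = 0} := by
    simp [zeroCount, codeFun]
  rw [hzero, ← card_units_filter_trace_mul_eq_zero (K := K) hb]
  exact card_filter_pow_eq_of_coprime_index (P := fun x : Lˣ => Algebra.trace K L (b * x) = 0) _
    hinv (by rwa [index_range_unitsMap_algebraMap])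

theorem zeroCount_of_ne_zero
    (he2 : Nat.Coprime ((Fintype.card L - 1) / (Fintype.card K - 1)) e2)
    (hd : Int.gcd ((Fintype.card K : ℤ) - 1) ((finrank K L : ℤ) * e1 - e2) = 1)
    {a : K} {b : L} (ha : a ≠ 0) (hb : b ≠ 0) :
    zeroCount e1 e2 a b = Fintype.card K ^ (finrank K L - 1) := by
  have hsum := sum_zeroCount (K := K) e1 e2 b
  rw [← add_sum_erase _ _ (mem_univ 0),
    sum_congr rfl fun a' ha' => zeroCount_eq_of_ne_zero e1 e2 hd (ne_of_mem_erase ha') ha b,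
    sum_const, card_erase_of_mem (mem_univ _), card_univ, zeroCount_zero_left e1 e2 he2 hb,
    smul_eq_mul, Fintype.card_units, Module.card_eq_pow_finrank (K := K) (V := L)] at hsum
  set q := Fintype.card K
  set Q := q ^ (finrank K L - 1)
  have hq : 1 < q := Fintype.one_lt_card
  have hqk : q ^ finrank K L = q * Q := by rw [← pow_succ', Nat.sub_add_cancel finrank_pos]
  have hQ : 1 ≤ Q := Nat.one_le_pow _ _ (by omega)
  have hle : Q ≤ q * Q := Nat.le_mul_of_pos_left Q (by omega)
  have hsub := Nat.sub_one_mul q Q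
  refine Nat.eq_of_mul_eq_mul_left (show 0 < q - 1 by omega) ?_
  omega

theorem isLeast_wH {γ : Lˣ} (hγ : ∀ x : Lˣ, x ∈ Subgroup.zpowers γ)
    (he2 : Nat.Coprime ((Fintype.card L - 1) / (Fintype.card K - 1)) e2)
    (hd : Int.gcd ((Fintype.card K : ℤ) - 1) ((finrank K L : ℤ) * e1 - e2) = 1) :
    IsLeast {w | ∃ a : K, ∃ b : L, ¬(a = 0 ∧ b = 0) ∧ wH (Nat.card Lˣ) γ e1 e2 a b = w}
      (Fintype.card K ^ (finrank K L - 1) * (Fintype.card K - 1) - 1) := by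
  have hn : Nat.card Lˣ = Fintype.card K ^ (finrank K L - 1) * Fintype.card K - 1 := by
    rw [Nat.card_units, Nat.card_eq_fintype_card, card_eq_pow_finrank (K := K), ← pow_succ,
      Nat.sub_add_cancel finrank_pos]
  have hsub := Nat.mul_sub_one (Fintype.card K ^ (finrank K L - 1)) (Fintype.card K)
  have hle := Nat.le_mul_of_pos_right (Fintype.card K ^ (finrank K L - 1))
    (Fintype.card_pos (α := K))
  refine ⟨⟨1, 1, by simp, ?_⟩, ?_⟩
  · rw [wH_eq_card_sub_zeroCount e1 e2 hγ,
      zeroCount_of_ne_zero e1 e2 he2 hd one_ne_zero one_ne_zero, hn]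
    omega
  · rintro w ⟨a, b, hab, rfl⟩
    rw [wH_eq_card_sub_zeroCount e1 e2 hγ, hn]
    by_cases ha : a = 0 <;> by_cases hb : b = 0
    · exact absurd ⟨ha, hb⟩ hab
    · rw [ha, zeroCount_zero_left e1 e2 he2 hb]
      omega
    · rw [hb, zeroCount_zero_right e1 e2 ha]
      omega
    · rw [zeroCount_of_ne_zero e1 e2 he2 hd ha hb]
      omega

end CodeWeights

theorem statement_4_general
    (k q : ℕ) (hk : 2 ≤ k)
    (F E : Type*) [Field F] [Fintype F] [Field E] [Fintype E]
    [Algebra F E]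
    (hF : Fintype.card F = q) (hE : Fintype.card E = q ^ k)
    (γ : Eˣ) (hγ : ∀ x : Eˣ, x ∈ Subgroup.zpowers γ)
    (e1 e2 : ℕ)
    (h1 : Nat.gcd ((q ^ k - 1) / (q - 1)) e2 = 1)
    (hd : Int.gcd ((q : ℤ) - 1) ((k : ℤ) * e1 - e2) = 1) :
    -- the code has `q^(k+1)` codewords (dimension `k+1` over `F_q`)
    Nat.card (Set.range
        (fun ab : F × E => fun i : Fin (q ^ k - 1) => coord γ e1 e2 ab.1 ab.2 (i : ℕ)))
      = q ^ (k + 1) ∧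
    -- the minimum distance is `q^(k-1)(q-1) - 1`
    IsLeast {w : ℕ | ∃ a : F, ∃ b : E, ¬(a = 0 ∧ b = 0) ∧ wH (q ^ k - 1) γ e1 e2 a b = w}
      (q ^ (k - 1) * (q - 1) - 1) ∧
    -- the Griesmer bound is met with equality
    (∑ i ∈ Finset.range (k + 1), ⌈((q ^ (k - 1) * (q - 1) - 1 : ℕ) : ℚ) / (q : ℚ) ^ i⌉
      = (q : ℤ) ^ k - 1) := by
  subst hF
  have hq : 2 ≤ Fintype.card F := Fintype.one_lt_card
  obtain rfl : Module.finrank F E = k :=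
    Nat.pow_right_injective hq (Module.card_eq_pow_finrank.symm.trans hE)
  rw [← hE] at h1
  have hn : Fintype.card F ^ Module.finrank F E - 1 = Nat.card Eˣ := by
    rw [Nat.card_units, Nat.card_eq_fintype_card, hE]
  have hmin := isLeast_wH e1 e2 hγ h1 hd
  have hmin_pos :
      0 < Fintype.card F ^ (Module.finrank F E - 1) * (Fintype.card F - 1) - 1 := by
    have hQ : 2 ≤ Fintype.card F ^ (Module.finrank F E - 1) :=
      hq.trans (Nat.le_self_pow (by omega) _)
    have := Nat.le_mul_of_pos_right (Fintype.card F ^ (Module.finrank F E - 1))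
      (by omega : 0 < Fintype.card F - 1)
    omega
  rw [hn]
  refine ⟨?_, hmin, griesmer_sum_eq hq hk⟩
  rw [card_range_codeword e1 e2 fun a b hab => hmin_pos.trans_le (hmin.2 ⟨a, b, hab, rfl⟩),
    Nat.card_prod, Nat.card_eq_fintype_card, Nat.card_eq_fintype_card, hE, pow_succ']

theorem statement_4
    (p e k q : ℕ) (hp : p.Prime) (he : 0 < e) (hk : 2 ≤ k) (hq : q = p ^ e)
    (F E : Type*) [Field F] [Fintype F] [Field E] [Fintype E]
    [Algebra F E] [Algebra (ZMod p) F]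
    (hF : Fintype.card F = q) (hE : Fintype.card E = q ^ k)
    (γ : Eˣ) (hγ : ∀ x : Eˣ, x ∈ Subgroup.zpowers γ)
    (e1 e2 : ℕ) (he1 : 0 < e1) (he2 : 0 < e2)
    (h1 : Nat.gcd ((q ^ k - 1) / (q - 1)) e2 = 1)
    (h2 : Nat.gcd (q - 1) (Nat.gcd e1 e2) = 1)
    (hd : Int.gcd ((q : ℤ) - 1) ((k : ℤ) * e1 - e2) = 1) :
    -- the code has `q^(k+1)` codewords (dimension `k+1` over `F_q`)
    Nat.card (Set.range
        (fun ab : F × E => fun i : Fin (q ^ k - 1) => coord γ e1 e2 ab.1 ab.2 (i : ℕ)))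
      = q ^ (k + 1) ∧
    -- the minimum distance is `q^(k-1)(q-1) - 1`
    IsLeast {w : ℕ | ∃ a : F, ∃ b : E, ¬(a = 0 ∧ b = 0) ∧ wH (q ^ k - 1) γ e1 e2 a b = w}
      (q ^ (k - 1) * (q - 1) - 1) ∧
    -- the Griesmer bound is met with equality
    (∑ i ∈ Finset.range (k + 1), ⌈((q ^ (k - 1) * (q - 1) - 1 : ℕ) : ℚ) / (q : ℚ) ^ i⌉
      = (q : ℤ) ^ k - 1) :=
  statement_4_general k q hk F E hF hE γ hγ e1 e2 h1 hd
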